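/- For n ≥ 1, the symmetric function q_n defined by the generating series Π_{i} (1+z a_i)/(1-z a_i) = Σ_n q_n z^n satisfies q_n = Σ_{μ odd, |μ|=n} z_μ^{-1} 2^{ℓ(μ)} p_μ, where the sum is over partitions μ of n with all parts odd, p_μ is the power-sum product, ℓ(μ) is the number of parts, and z_μ = Π_i i^{m_i(μ)} m_i(μ)!. -/

import Mathlib

/-!
Both sides are coefficients of power series `F` with `F(0) = 1` solving the Euler equation
`X F' = H F` for `H = ∑_{k odd} 2 pₖ Xᵏ`, and over a `ℚ`-algebra this equation has only one
such solution. For the product, `H` is the sum of the logarithmic Euler derivatives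
`2aX / (1 - a²X²)` of the factors `(1 + aX) / (1 - aX)`. For the partition side, the summand is
`∏ᵢ cᵢ^{mᵢ} / mᵢ!` with `cₖ = 2pₖ / k` for odd `k` and `cₖ = 0` otherwise, and removing one
part `k` from a partition of `n` gives the recursion `n wₙ = ∑ₖ k cₖ w_{n-k}` for the sums
`wₙ = ∑_{μ ⊢ n} ∏ᵢ cᵢ^{mᵢ} / mᵢ!`.
-/

open PowerSeries Finset

theorem Derivation.map_prod_eq_sum_mul_prod {R A ι : Type*} [CommSemiring R] [CommSemiring A]
    [Algebra R A] (D : Derivation R A A) (s : Finset ι) {f g : ι → A}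
    (h : ∀ i ∈ s, D (f i) = g i * f i) : D (∏ i ∈ s, f i) = (∑ i ∈ s, g i) * ∏ i ∈ s, f i := by
  classical
  induction s using Finset.induction_on with
  | empty => simp
  | insert a s ha ih =>
    rw [prod_insert ha, sum_insert ha, leibniz, smul_eq_mul, smul_eq_mul,
      ih fun i hi => h i (mem_insert_of_mem hi), h a (mem_insert_self a s)]
    ring

namespace PowerSeries

variable {R : Type*} [CommRing R]

theorem eq_of_X_mul_derivative_eq_mul [IsAddTorsionFree R] {F G H : R⟦X⟧}
    (hF : X * d⁄dX R F = H * F) (hG : X * d⁄dX R G = H * G)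
    (hc : constantCoeff F = constantCoeff G) (hu : IsUnit (constantCoeff G)) : F = G := by
  obtain ⟨u, rfl⟩ := isUnit_iff_constantCoeff.mpr hu
  have hinv : (↑u⁻¹ : R⟦X⟧) * u = 1 := u.inv_mul
  have hD : d⁄dX R (F * ↑u⁻¹) = d⁄dX R 1 := by
    refine X_mul_cancel ?_
    rw [derivative_one, Derivation.leibniz, derivative_inv, smul_eq_mul, smul_eq_mul]
    linear_combination (-F * (↑u⁻¹ : R⟦X⟧) ^ 2) * hG + (↑u⁻¹ : R⟦X⟧) * hF
      - (F * ↑u⁻¹ * H) * hinv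
  have hconst : constantCoeff (F * ↑u⁻¹ : R⟦X⟧) = constantCoeff 1 := by
    rw [map_mul, hc, ← map_mul, u.mul_inv]
  simpa using (Units.mul_inv_eq_iff_eq_mul u).mp (derivative.ext hD hconst)

theorem one_sub_C_mul_X_mul_mk_pow (a : R) : (1 - C a * X) * mk (a ^ ·) = 1 := by
  ext (_ | n)
  · simp
  · rw [sub_mul, one_mul, mul_assoc, map_sub, coeff_C_mul, coeff_succ_X_mul]
    simp [pow_succ']

def oddPowers (a : R) : R⟦X⟧ :=
  mk fun k => if Odd k then 2 * a ^ k else 0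

theorem oddPowers_eq_sub (a : R) : oddPowers a = mk (a ^ ·) - mk ((-a) ^ ·) := by
  ext k
  rcases k.even_or_odd with hk | hk
  · simp [oddPowers, hk.neg_pow, Nat.not_odd_iff_even.mpr hk]
  · simp [oddPowers, hk.neg_pow, hk, two_mul]

theorem one_sub_mul_one_add_mul_oddPowers (a : R) :
    (1 - C a * X) * (1 + C a * X) * oddPowers a = 2 * C a * X := by
  have hplus := one_sub_C_mul_X_mul_mk_pow a
  have hminus := one_sub_C_mul_X_mul_mk_pow (-a)
  rw [map_neg] at hminus
  rw [oddPowers_eq_sub]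
  linear_combination (1 + C a * X) * hplus - (1 - C a * X) * hminus

theorem constantCoeff_eq_one_of_one_sub_C_mul_X_mul_eq_one {a : R} {S : R⟦X⟧}
    (hS : (1 - C a * X) * S = 1) : constantCoeff S = 1 := by
  simpa using congrArg constantCoeff hS

theorem X_mul_derivative_one_add_C_mul_X_mul {a : R} {S : R⟦X⟧} (hS : (1 - C a * X) * S = 1) :
    X * d⁄dX R ((1 + C a * X) * S) = oddPowers a * ((1 + C a * X) * S) := by
  have hDS : d⁄dX R S = C a * S ^ 2 := by
    rw [(d⁄dX R).leibniz_of_mul_eq_one ((mul_comm _ _).trans hS)]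
    simp [mul_comm]
  have hkey := one_sub_mul_one_add_mul_oddPowers a
  rw [Derivation.leibniz, hDS]
  simp only [smul_eq_mul, map_add, Derivation.map_one_eq_zero, Derivation.leibniz, derivative_X,
    mul_one, derivative_C, mul_zero, add_zero, zero_add]
  linear_combination (oddPowers a * (1 + C a * X) * S - X * C a * S) * hS - S ^ 2 * hkey

end PowerSeries

section ExpWeight

variable {R : Type*} [CommRing R] [Algebra ℚ R]

theorem succ_mul_inv_factorial_smul_pow_succ (x : R) (m : ℕ) :
    ((m + 1 : ℕ) : R) * (((m + 1).factorial : ℚ)⁻¹ • x ^ (m + 1)) =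
      x * ((m.factorial : ℚ)⁻¹ • x ^ m) := by
  rw [mul_smul_comm, ← nsmul_eq_mul, ← Nat.cast_smul_eq_nsmul ℚ, smul_smul, mul_smul_comm,
    pow_succ']
  congr 1
  push_cast [Nat.factorial_succ]
  field_simp

namespace Multiset

def expWeight (c : ℕ → R) (s : Multiset ℕ) : R :=
  ∏ i ∈ s.toFinset, ((s.count i).factorial : ℚ)⁻¹ • c i ^ s.count i

theorem expWeight_eq_prod_of_subset (c : ℕ → R) {s : Multiset ℕ} {T : Finset ℕ}
    (hT : s.toFinset ⊆ T) :
    expWeight c s = ∏ i ∈ T, ((s.count i).factorial : ℚ)⁻¹ • c i ^ s.count i :=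
  prod_subset hT fun i _ hi => by simp [count_eq_zero.mpr (by simpa using hi)]

theorem count_mul_expWeight_cons (c : ℕ → R) (k : ℕ) (s : Multiset ℕ) :
    ((k ::ₘ s).count k : R) * expWeight c (k ::ₘ s) = c k * expWeight c s := by
  have hT : s.toFinset ⊆ (k ::ₘ s).toFinset := toFinset_subset.mpr (subset_cons s k)
  have hk : k ∈ (k ::ₘ s).toFinset := by simp
  rw [expWeight, expWeight_eq_prod_of_subset c hT, ← mul_prod_erase _ _ hk,
    ← mul_prod_erase _ _ hk,
    prod_congr rfl fun i hi => by rw [count_cons_of_ne (ne_of_mem_erase hi)],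
    ← mul_assoc, ← mul_assoc, count_cons_self, succ_mul_inv_factorial_smul_pow_succ]

end Multiset

end ExpWeight

namespace Nat.Partition

open Multiset (expWeight count_mul_expWeight_cons)

variable {R : Type*} [CommRing R] [Algebra ℚ R]

def expWeightSum (c : ℕ → R) (n : ℕ) : R :=
  ∑ μ : n.Partition, expWeight c μ.parts

theorem expWeightSum_zero (c : ℕ → R) : expWeightSum c 0 = 1 := by
  simp [expWeightSum, expWeight]

theorem sum_count_mul_expWeight (c : ℕ → R) {n k : ℕ} (hk : 1 ≤ k) (hkn : k ≤ n) :
    ∑ μ : n.Partition, (μ.parts.count k : R) * expWeight c μ.parts =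
      c k * expWeightSum c (n - k) := by
  classical
  rw [← sum_filter_of_ne (p := (k ∈ ·.parts)) fun μ _ h => by
      by_contra hk; simp [Multiset.count_eq_zero.mpr hk] at h,
    sum_subtype (p := (k ∈ ·.parts)) _ (by simp), expWeightSum, mul_sum]
  exact (Fintype.sum_equiv (partitionWithPartEquiv hk hkn).symm _ _ fun ν => by
    rw [partitionWithPartEquiv_symm_apply_parts, count_mul_expWeight_cons]).symm

theorem nat_mul_expWeightSum (c : ℕ → R) (n : ℕ) :
    (n : R) * expWeightSum c n = ∑ k ∈ range (n + 1), k * c k * expWeightSum c (n - k) := by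
  have hsize (μ : n.Partition) : (n : R) = ∑ k ∈ range (n + 1), (μ.parts.count k : R) * k := by
    have h := sum_multiset_count_of_subset μ.parts (range (n + 1)) fun k hk =>
      mem_range_succ_iff.mpr (le_of_mem_parts (Multiset.mem_toFinset.mp hk))
    rw [μ.parts_sum] at h
    simpa using congrArg (Nat.cast : ℕ → R) h
  calc (n : R) * expWeightSum c n
      = ∑ k ∈ range (n + 1),
          k * ∑ μ : n.Partition, (μ.parts.count k : R) * expWeight c μ.parts := by
        rw [expWeightSum, mul_sum]
        simp_rw [mul_sum]
        rw [sum_comm]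
        refine sum_congr rfl fun μ _ => ?_
        rw [hsize μ, sum_mul]
        exact sum_congr rfl fun k _ => by ring
    _ = ∑ k ∈ range (n + 1), k * c k * expWeightSum c (n - k) := by
        refine sum_congr rfl fun k hk => ?_
        rcases k.eq_zero_or_pos with rfl | hk0
        · simp
        · rw [sum_count_mul_expWeight c hk0 (mem_range_succ_iff.mp hk), mul_assoc]

theorem X_mul_derivative_mk_expWeightSum (c : ℕ → R) :
    X * d⁄dX R (PowerSeries.mk (expWeightSum c)) =
      PowerSeries.mk (fun k => k * c k) * PowerSeries.mk (expWeightSum c) := by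
  ext (_ | n)
  · simp
  · rw [coeff_succ_X_mul, coeff_derivative, coeff_mul, Nat.sum_antidiagonal_eq_sum_range_succ_mk]
    simpa [mul_comm] using nat_mul_expWeightSum c (n + 1)

end Nat.Partition

namespace MvPolynomial

open Multiset (expWeight)

variable (σ R : Type*) [Fintype σ] [CommRing R] [Algebra ℚ R]

noncomputable def oddPsumCoeff (k : ℕ) : MvPolynomial σ R :=
  if Odd k then (2 / k : ℚ) • psum σ R k else 0

variable {σ R}

theorem sum_oddPowers_X :
    ∑ i, oddPowers (X i : MvPolynomial σ R) =
      PowerSeries.mk fun k => (k : MvPolynomial σ R) * oddPsumCoeff σ R k := by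
  refine PowerSeries.ext fun k => ?_
  simp only [map_sum, oddPowers, oddPsumCoeff, coeff_mk]
  split_ifs with hk
  · rw [← mul_sum, ← psum, Algebra.smul_def, ← mul_assoc, ← map_natCast (algebraMap ℚ _),
      ← map_mul, mul_div_cancel₀ _ (Nat.cast_ne_zero.mpr hk.pos.ne'), map_ofNat]
  · simp

theorem expWeight_oddPsumCoeff {n : ℕ} (μ : n.Partition) [Decidable (∀ i ∈ μ.parts, Odd i)] :
    expWeight (oddPsumCoeff σ R) μ.parts =
      if ∀ i ∈ μ.parts, Odd i then
        ((∏ i ∈ μ.parts.toFinset,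
            ((i : ℚ) ^ (μ.parts.count i) * (Nat.factorial (μ.parts.count i))))⁻¹ *
          2 ^ (Multiset.card μ.parts)) • psumPart σ R μ
      else 0 := by
  split_ifs with hodd
  · rw [expWeight, psumPart, prod_multiset_map_count, ← Multiset.toFinset_sum_count_eq,
      ← prod_pow_eq_pow_sum, ← prod_inv_distrib, ← prod_mul_distrib, ← prod_smul]
    refine prod_congr rfl fun i hi => ?_
    rw [oddPsumCoeff, if_pos (hodd i (Multiset.mem_toFinset.mp hi)), smul_pow, smul_smul]
    congr 1
    rw [div_pow]
    field_simp
  · obtain ⟨i, hi, heven⟩ := not_forall₂.mp hodd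
    refine prod_eq_zero (Multiset.mem_toFinset.mpr hi) ?_
    rw [oddPsumCoeff, if_neg heven, zero_pow (Multiset.count_ne_zero.mpr hi), smul_zero]

end MvPolynomial

open Nat.Partition (expWeightSum expWeightSum_zero X_mul_derivative_mk_expWeightSum)
open MvPolynomial (oddPsumCoeff sum_oddPowers_X expWeight_oddPsumCoeff)

open Classical in
theorem stmt_8_general (N n : ℕ)
    (S : Fin N → PowerSeries (MvPolynomial (Fin N) ℚ))
    (hS : ∀ i, (1 - PowerSeries.C (MvPolynomial.X i) * PowerSeries.X) * S i = 1) :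
    PowerSeries.coeff n
        (∏ i, (1 + PowerSeries.C (MvPolynomial.X i) * PowerSeries.X) * S i) =
      ∑ μ ∈ Finset.univ.filter (fun μ : Nat.Partition n => ∀ i ∈ μ.parts, Odd i),
        (((∏ i ∈ μ.parts.toFinset,
              ((i : ℚ) ^ (μ.parts.count i) * (Nat.factorial (μ.parts.count i))))⁻¹ *
            2 ^ (Multiset.card μ.parts)) •
          MvPolynomial.psumPart (Fin N) ℚ μ) := by
  set F := ∏ i, (1 + C (MvPolynomial.X i) * X) * S i
  have hF : X * d⁄dX _ F = PowerSeries.mk (fun k => k * oddPsumCoeff (Fin N) ℚ k) * F := by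
    rw [← sum_oddPowers_X]
    exact (X • d⁄dX (MvPolynomial (Fin N) ℚ)).map_prod_eq_sum_mul_prod univ
      (f := fun i => (1 + C (MvPolynomial.X i) * X) * S i) fun i _ => by
        rw [Derivation.smul_apply, smul_eq_mul, X_mul_derivative_one_add_C_mul_X_mul (hS i)]
  have hF_eq : F = PowerSeries.mk (expWeightSum (oddPsumCoeff (Fin N) ℚ)) :=
    eq_of_X_mul_derivative_eq_mul hF (X_mul_derivative_mk_expWeightSum _)
      (by simp [F, constantCoeff_eq_one_of_one_sub_C_mul_X_mul_eq_one (hS _), expWeightSum_zero])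
      (by simp [expWeightSum_zero])
  rw [hF_eq, coeff_mk, expWeightSum, sum_filter]
  exact sum_congr rfl fun μ _ => expWeight_oddPsumCoeff μ

open Classical in
/-- In `N` variables, let `q_n` be defined by the generating series
`Π_i (1+z a_i)/(1-z a_i) = Σ q_n z^n` (here `S i` is the inverse of `1 - a_i z`).
Then for `n ≥ 1`,
`q_n = Σ_{μ ⊢ n, μ odd} z_μ⁻¹ 2^{ℓ(μ)} p_μ`, where the sum is over partitions of `n`
with all parts odd, `p_μ` is the product of power sums, `ℓ(μ)` the number of parts,
and `z_μ = Π_i i^{m_i(μ)} m_i(μ)!`. -/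
theorem stmt_8 (N n : ℕ) (hn : 1 ≤ n)
    (S : Fin N → PowerSeries (MvPolynomial (Fin N) ℚ))
    (hS : ∀ i, (1 - PowerSeries.C (MvPolynomial.X i) * PowerSeries.X) * S i = 1) :
    PowerSeries.coeff n
        (∏ i, (1 + PowerSeries.C (MvPolynomial.X i) * PowerSeries.X) * S i) =
      ∑ μ ∈ Finset.univ.filter (fun μ : Nat.Partition n => ∀ i ∈ μ.parts, Odd i),
        (((∏ i ∈ μ.parts.toFinset,
              ((i : ℚ) ^ (μ.parts.count i) * (Nat.factorial (μ.parts.count i))))⁻¹ *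
            2 ^ (Multiset.card μ.parts)) •
          MvPolynomial.psumPart (Fin N) ℚ μ) :=
  stmt_8_general N n S hS
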